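/- Let λ be a pre-averaging function. There exists a constant C depending only on λ such that for all integers 1 ≤ m ≤ n, every sequence (b_j)_{0≤j≤n} of real numbers, and every function g: [0,1] → ℝ, |Σ_{i=2}^m g((i−1)/m)·Σ_{j: j/n ∈ ((i−2)/m, i/m]} λ̃²(m·j/n − (i−2))·(b_j − b_{j−1})| ≤ C·(max_{0≤j≤n} |b_j|)·m·|g|_{1,m}. -/

import Mathlib

/-!
The weight `w = λ̃²` has bounded variation on `[-1, 2]`: `λ` is Lipschitz on the open pieces of
its partition and vanishes on `(-1, 0)`, and bounded variation on an open interval extends to its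
closure because one-sided limits exist. Summation by parts turns each inner sum into two boundary
terms plus `Σ (w(t_{j+1}) - w(t_j)) b_j` along the increasing grid `t_j = m j / n - (i - 2)`, whose
points all lie in `[-1, 2]`; as `w(-1) = 0`, the inner sum is at most `3 Var(w) max |b_j|`.
Summing against `|g((i-1)/m)|` gives `m |g|_{1,m}`.
-/

open MeasureTheory ProbabilityTheory Real

/-- `λ̄ := (2∫₀¹ (∫₀ˢ λ(u) du)² ds)^{1/2}`. -/
noncomputable def lamBar (lam : ℝ → ℝ) : ℝ :=
  Real.sqrt (2 * ∫ s in (0:ℝ)..1, (∫ u in (0:ℝ)..s, lam u) ^ 2)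

/-- The normalized pre-averaging function `λ̃ := λ / λ̄`. -/
noncomputable def lamTilde (lam : ℝ → ℝ) (t : ℝ) : ℝ := lam t / lamBar lam

/-- A pre-averaging function: `λ : [0,2) → ℝ` (extended by `0` outside `[0,2)`)
piecewise Lipschitz, antisymmetric `λ(t) = −λ(2−t)` on `(0,2)`, not identically
zero. -/
def IsPreAveraging (lam : ℝ → ℝ) : Prop :=
  (∀ t : ℝ, t < 0 ∨ 2 ≤ t → lam t = 0) ∧
  (∀ t ∈ Set.Ioo (0:ℝ) 2, lam t = - lam (2 - t)) ∧
  (∃ (N : ℕ) (a : ℕ → ℝ), 0 < N ∧ a 0 = 0 ∧ a N = 2 ∧ (∀ i < N, a i < a (i + 1)) ∧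
    ∀ i < N, ∃ K : NNReal, LipschitzOnWith K lam (Set.Ioo (a i) (a (i + 1)))) ∧
  (∃ t, lam t ≠ 0)

/-- `Λ(s) := (∫ₛ² λ̃(u) du)·1_{[0,2]}(s)`. -/
noncomputable def bigLambda (lam : ℝ → ℝ) (s : ℝ) : ℝ :=
  Set.indicator (Set.Icc (0:ℝ) 2) (fun s' => ∫ u in s'..2, lamTilde lam u) s

/-- `Λ̄(s) := ((∫₀ˢ λ̃)² + (∫₀^{1−s} λ̃)²)^{1/2}·1_{[0,1]}(s)`. -/
noncomputable def bigLambdaBar (lam : ℝ → ℝ) (s : ℝ) : ℝ :=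
  Set.indicator (Set.Icc (0:ℝ) 1)
    (fun s' => Real.sqrt ((∫ u in (0:ℝ)..s', lamTilde lam u) ^ 2 +
      (∫ u in (0:ℝ)..(1 - s'), lamTilde lam u) ^ 2)) s

open Classical in
/-- The indices `j ∈ {0,…,n}` with `j/n ∈ ((i−2)/m, i/m]`. -/
noncomputable def window (n m i : ℕ) : Finset ℕ :=
  (Finset.range (n + 1)).filter
    (fun j => ((i : ℝ) - 2) / m < (j : ℝ) / n ∧ (j : ℝ) / n ≤ (i : ℝ) / m)

/-- The grid norm `|g|_{p,m} := (m⁻¹ Σ_{i=1}^m |g((i−1)/m)|^p)^{1/p}`. -/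
noncomputable def gridNorm (g : ℝ → ℝ) (p : ℝ) (m : ℕ) : ℝ :=
  ((m : ℝ)⁻¹ * ∑ i ∈ Finset.Icc 1 m, |g (((i : ℝ) - 1) / m)| ^ p) ^ (1 / p)

open Set

theorem BoundedVariationOn.Icc_trans {α E : Type*} [LinearOrder α] [PseudoEMetricSpace E]
    {f : α → E} {x y z : α}
    (hxy : BoundedVariationOn f (Icc x y)) (hyz : BoundedVariationOn f (Icc y z)) :
    BoundedVariationOn f (Icc x z) := by
  rcases lt_or_ge y x with hyx | hxy'
  · exact hyz.mono (Icc_subset_Icc_left hyx.le)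
  rcases lt_or_ge z y with hzy | hyz'
  · exact hxy.mono (Icc_subset_Icc_right hzy.le)
  have h := eVariationOn.Icc_add_Icc f (s := univ) hxy' hyz' (mem_univ y)
  simp only [univ_inter] at h
  exact ne_of_lt (h ▸ ENNReal.add_lt_top.2 ⟨hxy.lt_top, hyz.lt_top⟩)

theorem BoundedVariationOn.Ico_of_Ioo {E : Type*} [PseudoMetricSpace E] [CompleteSpace E]
    {f : ℝ → E} {a b : ℝ} (hab : a < b)
    (hf : BoundedVariationOn f (Ioo a b)) : BoundedVariationOn f (Ico a b) := by
  have hIoo : Ico a b ∩ Ioi a = Ioo a b := by ext; simp; grind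
  have := left_nhdsWithin_Ioo_neBot hab
  obtain ⟨l, hl⟩ := hf.exists_tendsto_right a
  rw [Ioo_inter_Ioi, max_self] at hl
  have key := eVariationOn.eVariationOn_on_inter_Ici_eq_Ioi_add_edist (f := f) (s := Ico a b)
    (by rwa [hIoo]) (left_mem_Ico.2 hab) (by rwa [hIoo])
  rw [Ico_inter_Ici, max_self, hIoo] at key
  exact ne_of_lt (key ▸ ENNReal.add_lt_top.2 ⟨hf.lt_top, edist_lt_top _ _⟩)

theorem BoundedVariationOn.Icc_of_Ico {E : Type*} [PseudoMetricSpace E] [CompleteSpace E]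
    {f : ℝ → E} {a b : ℝ} (hab : a < b)
    (hf : BoundedVariationOn f (Ico a b)) : BoundedVariationOn f (Icc a b) := by
  have hIco : Icc a b ∩ Iio b = Ico a b := by ext; simp; grind
  have := right_nhdsWithin_Ico_neBot hab
  obtain ⟨l, hl⟩ := hf.exists_tendsto_left b
  rw [Ico_inter_Iio, min_self] at hl
  have key := eVariationOn.eVariationOn_on_inter_Iic_eq_Iio_add_edist (f := f) (s := Icc a b)
    (by rwa [hIco]) (right_mem_Icc.2 hab.le) (by rwa [hIco])
  rw [inter_eq_left.2 Icc_subset_Iic_self, hIco] at key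
  exact ne_of_lt (key ▸ ENNReal.add_lt_top.2 ⟨hf.lt_top, edist_lt_top _ _⟩)

theorem LipschitzOnWith.boundedVariationOn_Icc {f : ℝ → ℝ} {K : NNReal} {a b : ℝ}
    (hf : LipschitzOnWith K f (Ioo a b)) : BoundedVariationOn f (Icc a b) := by
  rcases le_or_gt b a with hba | hab
  · exact BoundedVariationOn.of_subsingleton (subsingleton_Icc_of_ge hba)
  obtain ⟨g, hg, hfg⟩ := hf.extend_real
  have hIoo : BoundedVariationOn f (Ioo a b) := by
    rw [BoundedVariationOn, eVariationOn.congr hfg]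
    exact ((hg.locallyBoundedVariationOn univ) a b trivial trivial).mono
      (by rw [univ_inter]; exact Ioo_subset_Icc_self)
  exact (hIoo.Ico_of_Ioo hab).Icc_of_Ico hab

theorem boundedVariationOn_Icc_of_lipschitzOnWith_Ioo {f : ℝ → ℝ} (a : ℕ → ℝ) (N : ℕ)
    (hf : ∀ i < N, ∃ K, LipschitzOnWith K f (Ioo (a i) (a (i + 1)))) :
    BoundedVariationOn f (Icc (a 0) (a N)) := by
  induction N with
  | zero => exact .of_subsingleton (by simp)
  | succ N ih =>
    obtain ⟨K, hK⟩ := hf N N.lt_succ_self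
    exact (ih fun i hi => hf i (hi.trans N.lt_succ_self)).Icc_trans hK.boundedVariationOn_Icc

theorem BoundedVariationOn.sum_abs_sub_le {f : ℝ → ℝ} {s : Set ℝ} (hf : BoundedVariationOn f s)
    {u : ℕ → ℝ} {p q : ℕ} (hu : MonotoneOn u (Icc p q)) (hus : ∀ j ∈ Icc p q, u j ∈ s) :
    ∑ j ∈ Finset.Ico p q, |f (u (j + 1)) - f (u j)| ≤ (eVariationOn f s).toReal := by
  rw [← ENNReal.ofReal_le_ofReal_iff ENNReal.toReal_nonneg, ENNReal.ofReal_toReal hf,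
    ENNReal.ofReal_sum_of_nonneg fun _ _ => abs_nonneg _]
  simp_rw [← Real.dist_eq, ← edist_dist]
  exact eVariationOn.sum_le_of_monotoneOn_Icc hu hus

theorem IsPreAveraging.boundedVariationOn {lam : ℝ → ℝ} (hlam : IsPreAveraging lam) :
    BoundedVariationOn lam (Icc (-1) 2) := by
  obtain ⟨hzero, -, ⟨N, a, -, ha0, haN, -, hlip⟩, -⟩ := hlam
  have hneg : LipschitzOnWith 0 lam (Ioo (-1) 0) :=
    (LipschitzOnWith.zero_iff _).2 fun s hs t ht => by
      rw [hzero s (.inl hs.2), hzero t (.inl ht.2)]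
  have hpieces := boundedVariationOn_Icc_of_lipschitzOnWith_Ioo a N hlip
  rw [ha0, haN] at hpieces
  exact hneg.boundedVariationOn_Icc.Icc_trans hpieces

theorem IsPreAveraging.boundedVariationOn_lamTilde_sq {lam : ℝ → ℝ} (hlam : IsPreAveraging lam) :
    BoundedVariationOn (fun t => lamTilde lam t ^ 2) (Icc (-1) 2) := by
  have h := (lipschitzWith_smul (lamBar lam)⁻¹).comp_boundedVariationOn hlam.boundedVariationOn
  convert h.mul h using 1
  ext t
  simp [lamTilde, div_eq_inv_mul, sq]

theorem Finset.sum_Ioc_mul_sub_eq {R : Type*} [CommRing R] (w b : ℕ → R) {p q : ℕ} (hpq : p ≤ q) :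
    ∑ j ∈ Finset.Ioc p q, w j * (b j - b (j - 1)) =
      w q * b q - w p * b p - ∑ j ∈ Finset.Ico p q, (w (j + 1) - w j) * b j := by
  induction q, hpq using Nat.le_induction with
  | base => simp
  | succ q hpq ih =>
    rw [Finset.sum_Ioc_succ_top (by omega), ih, Finset.sum_Ico_succ_top hpq, Nat.add_sub_cancel]
    ring

theorem abs_sum_Ioc_mul_sub_le (w b : ℕ → ℝ) {p q : ℕ} (hpq : p ≤ q) {B : ℝ}
    (hb : ∀ j ∈ Finset.Icc p q, |b j| ≤ B) :
    |∑ j ∈ Finset.Ioc p q, w j * (b j - b (j - 1))| ≤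
      (|w p| + |w q| + ∑ j ∈ Finset.Ico p q, |w (j + 1) - w j|) * B := by
  have hbp := hb p (by simp [hpq])
  have hbq := hb q (by simp [hpq])
  have hB : 0 ≤ B := (abs_nonneg _).trans hbp
  have hsum : |∑ j ∈ Finset.Ico p q, (w (j + 1) - w j) * b j| ≤
      (∑ j ∈ Finset.Ico p q, |w (j + 1) - w j|) * B := by
    rw [Finset.sum_mul]
    refine (Finset.abs_sum_le_sum_abs _ _).trans (Finset.sum_le_sum fun j hj => ?_)
    rw [abs_mul]
    exact mul_le_mul_of_nonneg_left (hb j (Finset.Ico_subset_Icc_self hj)) (abs_nonneg _)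
  rw [Finset.sum_Ioc_mul_sub_eq w b hpq]
  calc _ ≤ |w q * b q| + |w p * b p| + |∑ j ∈ Finset.Ico p q, (w (j + 1) - w j) * b j| :=
        (abs_sub _ _).trans (add_le_add_left (abs_sub _ _) _)
    _ ≤ _ := by
      rw [abs_mul, abs_mul]
      nlinarith [mul_le_mul_of_nonneg_left hbp (abs_nonneg (w p)),
        mul_le_mul_of_nonneg_left hbq (abs_nonneg (w q))]

theorem window_eq_Ioc {n m i : ℕ} (hn : 0 < n) (hm : 0 < m) (hi : 2 ≤ i) (him : i ≤ m) :
    window n m i = Finset.Ioc ((i - 2) * n / m) (i * n / m) := by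
  have hnR : (0 : ℝ) < n := by exact_mod_cast hn
  have hmR : (0 : ℝ) < m := by exact_mod_cast hm
  have hcast : (i : ℝ) - 2 = ((i - 2 : ℕ) : ℝ) := by push_cast [hi]; ring
  ext j
  simp only [window, Finset.mem_filter, Finset.mem_range, Finset.mem_Ioc, hcast,
    div_lt_div_iff₀ hmR hnR, div_le_div_iff₀ hnR hmR, Nat.div_lt_iff_lt_mul hm,
    Nat.le_div_iff_mul_le hm]
  norm_cast
  constructor
  · rintro ⟨-, h⟩; exact h
  · rintro ⟨h1, h2⟩
    refine ⟨?_, h1, h2⟩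
    have : j * m ≤ n * m := mul_comm m n ▸ h2.trans (Nat.mul_le_mul_right n him)
    exact Nat.lt_succ_of_le (Nat.le_of_mul_le_mul_right this hm)

theorem cast_mul_div_sub_mem_Icc {n m i j : ℕ} (hn : 0 < n) (hm : 0 < m) (hmn : m ≤ n) (hi : 2 ≤ i)
    (hj : j ∈ Finset.Icc ((i - 2) * n / m) (i * n / m)) :
    (m : ℝ) * j / n - ((i : ℝ) - 2) ∈ Icc (-1) 2 := by
  rw [Finset.mem_Icc] at hj
  have hnR : (0 : ℝ) < n := by exact_mod_cast hn
  have hlow : (i - 2) * n < j * m + m := calc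
    (i - 2) * n < (i - 2) * n / m * m + m := Nat.lt_div_mul_add hm
    _ ≤ j * m + m := by gcongr; exact hj.1
  have hup : j * m ≤ i * n := calc
    j * m ≤ i * n / m * m := by gcongr; exact hj.2
    _ ≤ i * n := Nat.div_mul_le_self _ _
  have hlowR : ((i : ℝ) - 2) * n < j * m + n := by
    have : ((i - 2 : ℕ) : ℝ) * n < j * m + m := by exact_mod_cast hlow
    push_cast [hi] at this
    have : (m : ℝ) ≤ n := by exact_mod_cast hmn
    linarith
  have hupR : (j : ℝ) * m ≤ i * n := by exact_mod_cast hup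
  constructor
  · have : (i : ℝ) - 3 ≤ m * j / n := by rw [le_div_iff₀ hnR]; linarith
    linarith
  · have : (m : ℝ) * j / n ≤ i := by rw [div_le_iff₀ hnR]; linarith
    linarith

theorem abs_sum_window_le {f : ℝ → ℝ} (hf : BoundedVariationOn f (Icc (-1) 2)) (hf0 : f (-1) = 0)
    {m n i : ℕ} (hm : 0 < m) (hmn : m ≤ n) (hi : 2 ≤ i) (him : i ≤ m) {b : ℕ → ℝ} {B : ℝ}
    (hb : ∀ j ≤ n, |b j| ≤ B) :
    |∑ j ∈ window n m i, f ((m : ℝ) * j / n - ((i : ℝ) - 2)) * (b j - b (j - 1))| ≤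
      3 * (eVariationOn f (Icc (-1) 2)).toReal * B := by
  set V := (eVariationOn f (Icc (-1) 2)).toReal
  set t : ℕ → ℝ := fun j => (m : ℝ) * j / n - ((i : ℝ) - 2)
  have hn : 0 < n := hm.trans_le hmn
  have hpq : (i - 2) * n / m ≤ i * n / m := Nat.div_le_div_right (by gcongr; omega)
  have hq : i * n / m ≤ n := Nat.div_le_of_le_mul (Nat.mul_le_mul_right n him)
  have ht : ∀ j ∈ Finset.Icc ((i - 2) * n / m) (i * n / m), t j ∈ Icc (-1) 2 :=
    fun j hj => cast_mul_div_sub_mem_Icc hn hm hmn hi hj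
  have hbound : ∀ x ∈ Icc (-1 : ℝ) 2, |f x| ≤ V := fun x hx => by
    simpa [hf0, Real.dist_eq] using hf.dist_le hx (left_mem_Icc.2 (by norm_num))
  have hvar := hf.sum_abs_sub_le (u := t) (p := (i - 2) * n / m) (q := i * n / m)
    (fun j _ k _ hjk => by simp only [t]; gcongr) (fun j hj => ht j (Finset.mem_Icc.2 hj))
  have hB : 0 ≤ B := (abs_nonneg _).trans (hb 0 n.zero_le)
  rw [window_eq_Ioc hn hm hi him]
  refine (abs_sum_Ioc_mul_sub_le (f ∘ t) b hpq fun j hj => hb j ?_).trans ?_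
  · exact (Finset.mem_Icc.1 hj).2.trans hq
  · gcongr
    have := hbound _ (ht _ (Finset.left_mem_Icc.2 hpq))
    have := hbound _ (ht _ (Finset.right_mem_Icc.2 hpq))
    simp only [Function.comp_apply]
    linarith

theorem gridNorm_one (g : ℝ → ℝ) (m : ℕ) :
    gridNorm g 1 m = (m : ℝ)⁻¹ * ∑ i ∈ Finset.Icc 1 m, |g (((i : ℝ) - 1) / m)| := by
  simp [gridNorm]

/-- Summation-by-parts bound: there is `C` depending only on `λ` such that for
all `1 ≤ m ≤ n`, every sequence `(b_j)_{0≤j≤n}` bounded by `Bmax` and every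
`g : [0,1] → ℝ`,
`|Σ_{i=2}^m g((i−1)/m) Σ_{j/n ∈ ((i−2)/m, i/m]} λ̃²(mj/n−(i−2)) (b_j − b_{j−1})|
  ≤ C Bmax m |g|_{1,m}`. -/
theorem abel_summation_lamTilde_sq (lam : ℝ → ℝ) (hlam : IsPreAveraging lam) :
    ∃ C : ℝ, 0 < C ∧ ∀ m n : ℕ, 1 ≤ m → m ≤ n →
      ∀ (b : ℕ → ℝ) (Bmax : ℝ), (∀ j ≤ n, |b j| ≤ Bmax) →
      ∀ g : ℝ → ℝ,
      |∑ i ∈ Finset.Icc 2 m, g (((i : ℝ) - 1) / m) *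
          ∑ j ∈ window n m i,
            (lamTilde lam ((m : ℝ) * j / n - ((i : ℝ) - 2))) ^ 2
              * (b j - b (j - 1))|
        ≤ C * Bmax * m * gridNorm g 1 m := by
  have hw := hlam.boundedVariationOn_lamTilde_sq
  have hw0 : lamTilde lam (-1) ^ 2 = 0 := by simp [lamTilde, hlam.1 (-1) (.inl (by norm_num))]
  set V := (eVariationOn (fun t => lamTilde lam t ^ 2) (Icc (-1) 2)).toReal
  refine ⟨3 * V + 1, by positivity, fun m n hm hmn b Bmax hb g => ?_⟩
  have hB : 0 ≤ Bmax := (abs_nonneg _).trans (hb 0 n.zero_le)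
  have hwindow : ∀ i ∈ Finset.Icc 2 m, |∑ j ∈ window n m i,
      lamTilde lam ((m : ℝ) * j / n - ((i : ℝ) - 2)) ^ 2 * (b j - b (j - 1))| ≤
        (3 * V + 1) * Bmax := fun i hi =>
    (abs_sum_window_le hw hw0 hm hmn (Finset.mem_Icc.1 hi).1 (Finset.mem_Icc.1 hi).2 hb).trans
      (by nlinarith)
  calc _ ≤ ∑ i ∈ Finset.Icc 2 m, |g (((i : ℝ) - 1) / m)| * ((3 * V + 1) * Bmax) := by
        refine (Finset.abs_sum_le_sum_abs _ _).trans (Finset.sum_le_sum fun i hi => ?_)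
        rw [abs_mul]
        exact mul_le_mul_of_nonneg_left (hwindow i hi) (abs_nonneg _)
    _ ≤ ∑ i ∈ Finset.Icc 1 m, |g (((i : ℝ) - 1) / m)| * ((3 * V + 1) * Bmax) :=
        Finset.sum_le_sum_of_subset_of_nonneg (Finset.Icc_subset_Icc_left one_le_two)
          fun _ _ _ => by positivity
    _ = (3 * V + 1) * Bmax * m * gridNorm g 1 m := by
        rw [gridNorm_one, ← Finset.sum_mul]
        field_simp
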